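/- Let ν¹, ν² ∈ M₂(Ω₁) and let γ be the restriction to Ω₂ = [0,∞)² \ {0} of the pushforward of the Lebesgue measure on (0,∞) under t ↦ (U_{ν¹}^{-1}(t), U_{ν²}^{-1}(t)). Then γ has marginals (restricted to (0,∞)) equal to ν¹ and ν², i.e., for every a > 0, γ((a,∞) × [0,∞)) = U_{ν¹}(a) and γ([0,∞) × (a,∞)) = U_{ν²}(a), and for all a,b > 0, γ((a,∞) × (b,∞)) = min(U_{ν¹}(a), U_{ν²}(b)). -/

import Mathlib

/-!
For `t > 0` the pseudo-inverse satisfies the Galois relation `a < U_ν⁻¹(t) ↔ t < U_ν(a)`;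
this uses the right-continuity of `U_ν` and `U_ν(x) → 0` as `x → ∞`, which is where the finite
second moment enters (through a Markov bound). Hence the Lebesgue measure of the set of
`t > 0` with `U_{ν¹}⁻¹(t) > a` and `U_{ν²}⁻¹(t) > b` is that of `(0, min (U_{ν¹}(a), U_{ν²}(b)))`.
-/

open MeasureTheory ENNReal Set Filter Topology

namespace MeasureTheory

variable (ν : Measure ℝ)

lemma measure_Ioi_one_le_lintegral_sq : ν (Ioi 1) ≤ ∫⁻ x, ENNReal.ofReal (x ^ 2) ∂ν := by
  rw [← lintegral_indicator_one measurableSet_Ioi]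
  refine lintegral_mono (indicator_le fun x hx => ?_)
  exact ENNReal.one_le_ofReal.2 (one_le_pow₀ (le_of_lt hx))

lemma tendsto_measure_Ioi_atTop (h : ∃ x, ν (Ioi x) ≠ ∞) :
    Tendsto (fun x => ν (Ioi x)) atTop (𝓝 0) := by
  have := tendsto_measure_iInter_atTop (μ := ν) (fun _ => measurableSet_Ioi.nullMeasurableSet)
    (fun _ _ hxy => Ioi_subset_Ioi hxy) h
  rwa [iInter_eq_empty_iff.2 fun x => ⟨x + 1, by simp⟩, measure_empty] at this

variable {ν}

lemma measure_Ioi_le_of_forall_gt {a : ℝ} {c : ℝ≥0∞} (h : ∀ x > a, ν (Ioi x) ≤ c) :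
    ν (Ioi a) ≤ c := by
  obtain ⟨u, hu_anti, hu_gt, hu_lim⟩ := exists_seq_strictAnti_tendsto a
  have hunion : Ioi a = ⋃ n, Ioi (u n) := by
    ext x
    simp only [mem_Ioi, mem_iUnion]
    exact ⟨fun hx => (hu_lim.eventually (gt_mem_nhds hx)).exists,
      fun ⟨n, hn⟩ => (hu_gt n).trans hn⟩
  have hmono : Monotone fun n => Ioi (u n) := fun _ _ hmn => Ioi_subset_Ioi (hu_anti.antitone hmn)
  rw [hunion, hmono.measure_iUnion]
  exact iSup_le fun n => h _ (hu_gt n)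

end MeasureTheory

noncomputable def tailQuantile (ν : Measure ℝ) (t : ℝ) : ℝ :=
  sInf {x : ℝ | 0 ≤ x ∧ ν (Ioi x) ≤ ENNReal.ofReal t}

namespace tailQuantile

variable {ν : Measure ℝ}

lemma nonneg (t : ℝ) : 0 ≤ tailQuantile ν t :=
  Real.sInf_nonneg fun _ hx => hx.1

lemma preimage_Ici_zero : tailQuantile ν ⁻¹' Ici 0 = univ :=
  eq_univ_of_forall nonneg

lemma nonempty_setOf (hν : Tendsto (fun x => ν (Ioi x)) atTop (𝓝 0)) {t : ℝ} (ht : 0 < t) :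
    {x : ℝ | 0 ≤ x ∧ ν (Ioi x) ≤ ENNReal.ofReal t}.Nonempty :=
  ((hν.eventually (gt_mem_nhds (ENNReal.ofReal_pos.2 ht))).and (eventually_ge_atTop 0)).exists.imp
    fun _ hx => ⟨hx.2, hx.1.le⟩

lemma lt_iff (hν : Tendsto (fun x => ν (Ioi x)) atTop (𝓝 0)) {a t : ℝ} (ha : 0 ≤ a)
    (ht : 0 < t) :
    a < tailQuantile ν t ↔ ENNReal.ofReal t < ν (Ioi a) := by
  rw [← not_le, ← not_le, not_iff_not]
  constructor
  · intro h
    refine measure_Ioi_le_of_forall_gt fun x hx => ?_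
    obtain ⟨y, hy, hyx⟩ := (csInf_lt_iff ⟨0, fun _ hx => hx.1⟩ (nonempty_setOf hν ht)).1
      (h.trans_lt hx)
    exact (measure_mono (Ioi_subset_Ioi hyx.le)).trans hy.2
  · exact fun h => csInf_le ⟨0, fun _ hx => hx.1⟩ ⟨ha, h⟩

lemma antitoneOn (hν : Tendsto (fun x => ν (Ioi x)) atTop (𝓝 0)) :
    AntitoneOn (tailQuantile ν) (Ioi 0) := fun _ hs _ _ hst =>
  csInf_le_csInf ⟨0, fun _ hx => hx.1⟩ (nonempty_setOf hν hs)
    fun _ hx => ⟨hx.1, hx.2.trans (ENNReal.ofReal_le_ofReal hst)⟩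

lemma preimage_Ioi_inter_Ioi (hν : Tendsto (fun x => ν (Ioi x)) atTop (𝓝 0)) {a : ℝ}
    (ha : 0 ≤ a) :
    tailQuantile ν ⁻¹' Ioi a ∩ Ioi 0 = {t | ENNReal.ofReal t < ν (Ioi a)} ∩ Ioi 0 := by
  ext t
  exact and_congr_left fun ht => lt_iff hν ha ht

end tailQuantile

lemma volume_setOf_ofReal_lt_inter_Ioi (m : ℝ≥0∞) :
    volume ({t : ℝ | ENNReal.ofReal t < m} ∩ Ioi 0) = m := by
  induction m using ENNReal.recTopCoe with
  | top => simp
  | coe r =>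
    have : {t : ℝ | ENNReal.ofReal t < r} ∩ Ioi 0 = Ioo 0 (r : ℝ) := by
      ext t
      rw [mem_inter_iff, and_comm]
      exact and_congr_right fun ht => ENNReal.ofReal_lt_coe_iff (le_of_lt ht)
    simp [this]

noncomputable def quantileCoupling (ν₁ ν₂ : Measure ℝ) : Measure (ℝ × ℝ) :=
  (volume.restrict (Ioi 0)).map fun t => (tailQuantile ν₁ t, tailQuantile ν₂ t)

section quantileCoupling

variable {ν₁ ν₂ : Measure ℝ}

lemma quantileCoupling_apply (hν₁ : Tendsto (fun x => ν₁ (Ioi x)) atTop (𝓝 0))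
    (hν₂ : Tendsto (fun x => ν₂ (Ioi x)) atTop (𝓝 0))
    {S : Set (ℝ × ℝ)} (hS : MeasurableSet S) :
    quantileCoupling ν₁ ν₂ S =
      volume ((fun t => (tailQuantile ν₁ t, tailQuantile ν₂ t)) ⁻¹' S ∩ Ioi 0) := by
  have hF : AEMeasurable (fun t => (tailQuantile ν₁ t, tailQuantile ν₂ t))
      (volume.restrict (Ioi 0)) :=
    (aemeasurable_restrict_of_antitoneOn measurableSet_Ioi (tailQuantile.antitoneOn hν₁)).prodMk
      (aemeasurable_restrict_of_antitoneOn measurableSet_Ioi (tailQuantile.antitoneOn hν₂))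
  rw [quantileCoupling, Measure.map_apply_of_aemeasurable hF hS,
    Measure.restrict_apply' measurableSet_Ioi]

lemma quantileCoupling_Ioi_prod_Ici (hν₁ : Tendsto (fun x => ν₁ (Ioi x)) atTop (𝓝 0))
    (hν₂ : Tendsto (fun x => ν₂ (Ioi x)) atTop (𝓝 0))
    {a : ℝ} (ha : 0 ≤ a) :
    quantileCoupling ν₁ ν₂ (Ioi a ×ˢ Ici 0) = ν₁ (Ioi a) := by
  rw [quantileCoupling_apply hν₁ hν₂ (measurableSet_Ioi.prod measurableSet_Ici), mk_preimage_prod,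
    tailQuantile.preimage_Ici_zero, inter_univ,
    tailQuantile.preimage_Ioi_inter_Ioi hν₁ ha, volume_setOf_ofReal_lt_inter_Ioi]

lemma quantileCoupling_Ici_prod_Ioi (hν₁ : Tendsto (fun x => ν₁ (Ioi x)) atTop (𝓝 0))
    (hν₂ : Tendsto (fun x => ν₂ (Ioi x)) atTop (𝓝 0))
    {b : ℝ} (hb : 0 ≤ b) :
    quantileCoupling ν₁ ν₂ (Ici 0 ×ˢ Ioi b) = ν₂ (Ioi b) := by
  rw [quantileCoupling_apply hν₁ hν₂ (measurableSet_Ici.prod measurableSet_Ioi), mk_preimage_prod,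
    tailQuantile.preimage_Ici_zero, univ_inter,
    tailQuantile.preimage_Ioi_inter_Ioi hν₂ hb, volume_setOf_ofReal_lt_inter_Ioi]

lemma quantileCoupling_Ioi_prod_Ioi (hν₁ : Tendsto (fun x => ν₁ (Ioi x)) atTop (𝓝 0))
    (hν₂ : Tendsto (fun x => ν₂ (Ioi x)) atTop (𝓝 0))
    {a b : ℝ} (ha : 0 ≤ a) (hb : 0 ≤ b) :
    quantileCoupling ν₁ ν₂ (Ioi a ×ˢ Ioi b) = min (ν₁ (Ioi a)) (ν₂ (Ioi b)) := by
  rw [quantileCoupling_apply hν₁ hν₂ (measurableSet_Ioi.prod measurableSet_Ioi), mk_preimage_prod,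
    inter_inter_distrib_right, tailQuantile.preimage_Ioi_inter_Ioi hν₁ ha,
    tailQuantile.preimage_Ioi_inter_Ioi hν₂ hb, ← inter_inter_distrib_right, ← ofPred_and]
  simp only [← lt_min_iff, volume_setOf_ofReal_lt_inter_Ioi]

end quantileCoupling

theorem stmt_14_general (ν₁ ν₂ : Measure ℝ)
    (h₁mom : ∫⁻ x, ENNReal.ofReal (x ^ 2) ∂ν₁ ≠ ⊤)
    (h₂mom : ∫⁻ x, ENNReal.ofReal (x ^ 2) ∂ν₂ ≠ ⊤)
    -- `γ` is the restriction to `Ω₂ = [0,∞)² \ {0}` of the pushforward of Lebesgue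
    -- measure on `(0,∞)` under `t ↦ (U_{ν¹}^{-1}(t), U_{ν²}^{-1}(t))`
    (γ : Measure (ℝ × ℝ))
    (hγ : γ = ((volume.restrict (Set.Ioi (0 : ℝ))).map
        (fun t : ℝ => (sInf {x : ℝ | 0 ≤ x ∧ ν₁ (Set.Ioi x) ≤ ENNReal.ofReal t},
          sInf {x : ℝ | 0 ≤ x ∧ ν₂ (Set.Ioi x) ≤ ENNReal.ofReal t}))).restrict
        {p : ℝ × ℝ | (0 ≤ p.1 ∧ 0 ≤ p.2) ∧ p ≠ 0}) :
    (∀ a > (0 : ℝ), γ (Set.Ioi a ×ˢ Set.Ici (0 : ℝ)) = ν₁ (Set.Ioi a)) ∧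
    (∀ b > (0 : ℝ), γ (Set.Ici (0 : ℝ) ×ˢ Set.Ioi b) = ν₂ (Set.Ioi b)) ∧
    (∀ a > (0 : ℝ), ∀ b > (0 : ℝ),
      γ (Set.Ioi a ×ˢ Set.Ioi b) = min (ν₁ (Set.Ioi a)) (ν₂ (Set.Ioi b))) := by
  have hν₁ := tendsto_measure_Ioi_atTop ν₁
    ⟨1, ne_top_of_le_ne_top h₁mom (measure_Ioi_one_le_lintegral_sq ν₁)⟩
  have hν₂ := tendsto_measure_Ioi_atTop ν₂
    ⟨1, ne_top_of_le_ne_top h₂mom (measure_Ioi_one_le_lintegral_sq ν₂)⟩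
  change γ = (quantileCoupling ν₁ ν₂).restrict _ at hγ
  subst hγ
  refine ⟨fun a ha => ?_, fun b hb => ?_, fun a ha b hb => ?_⟩
  · rw [Measure.restrict_eq_self _ ?_, quantileCoupling_Ioi_prod_Ici hν₁ hν₂ ha.le]
    rintro p ⟨h₁, h₂⟩
    exact ⟨⟨(ha.trans h₁).le, h₂⟩, fun h => (ha.trans h₁).ne' (congrArg Prod.fst h)⟩
  · rw [Measure.restrict_eq_self _ ?_, quantileCoupling_Ici_prod_Ioi hν₁ hν₂ hb.le]
    rintro p ⟨h₁, h₂⟩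
    exact ⟨⟨h₁, (hb.trans h₂).le⟩, fun h => (hb.trans h₂).ne' (congrArg Prod.snd h)⟩
  · rw [Measure.restrict_eq_self _ ?_, quantileCoupling_Ioi_prod_Ioi hν₁ hν₂ ha.le hb.le]
    rintro p ⟨h₁, h₂⟩
    exact ⟨⟨(ha.trans h₁).le, (hb.trans h₂).le⟩,
      fun h => (ha.trans h₁).ne' (congrArg Prod.fst h)⟩

theorem stmt_14 (ν₁ ν₂ : Measure ℝ)
    (h₁supp : ν₁ (Set.Iic 0) = 0) (h₂supp : ν₂ (Set.Iic 0) = 0)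
    (h₁mom : ∫⁻ x, ENNReal.ofReal (x ^ 2) ∂ν₁ ≠ ⊤)
    (h₂mom : ∫⁻ x, ENNReal.ofReal (x ^ 2) ∂ν₂ ≠ ⊤)
    -- `γ` is the restriction to `Ω₂ = [0,∞)² \ {0}` of the pushforward of Lebesgue
    -- measure on `(0,∞)` under `t ↦ (U_{ν¹}^{-1}(t), U_{ν²}^{-1}(t))`
    (γ : Measure (ℝ × ℝ))
    (hγ : γ = ((volume.restrict (Set.Ioi (0 : ℝ))).map
        (fun t : ℝ => (sInf {x : ℝ | 0 ≤ x ∧ ν₁ (Set.Ioi x) ≤ ENNReal.ofReal t},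
          sInf {x : ℝ | 0 ≤ x ∧ ν₂ (Set.Ioi x) ≤ ENNReal.ofReal t}))).restrict
        {p : ℝ × ℝ | (0 ≤ p.1 ∧ 0 ≤ p.2) ∧ p ≠ 0}) :
    (∀ a > (0 : ℝ), γ (Set.Ioi a ×ˢ Set.Ici (0 : ℝ)) = ν₁ (Set.Ioi a)) ∧
    (∀ b > (0 : ℝ), γ (Set.Ici (0 : ℝ) ×ˢ Set.Ioi b) = ν₂ (Set.Ioi b)) ∧
    (∀ a > (0 : ℝ), ∀ b > (0 : ℝ),
      γ (Set.Ioi a ×ˢ Set.Ioi b) = min (ν₁ (Set.Ioi a)) (ν₂ (Set.Ioi b))) :=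
  stmt_14_general ν₁ ν₂ h₁mom h₂mom γ hγ
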